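/- Let C be an isometric cycle in a graph with unique shortest paths, and let r be a vertex on C. Then there is a unique edge e = (u,v) on C such that C is the disjoint union of e, the shortest r-to-u path, and the shortest r-to-v path. -/

import Mathlib

/-!
Let `e` be the edge of `C` at which the initial arcs of `C` from `r` stop being shortest paths.
The shortest path from `r` to the far end `v` of `e` is an arc of `C`; it cannot run forwards
through `e`, so it is the rest of `C` read backwards, which gives the decomposition. Conversely,
in any such decomposition `e' = s(u', v')` the two shortest paths are arcs of `C` leaving `r` in
opposite directions. The arc to `u'` is shortest, while the arc through `e'` to `v'` is not: by
uniqueness it would be the other shortest path, and `e'` would occur twice on `C`. Since prefixes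
of shortest paths are shortest, this pins `e'` down as `e`.
-/

open SimpleGraph

/-- The weight of a walk: sum of its edge weights. -/
def walkWeight {V : Type*} {G : SimpleGraph V} (w : Sym2 V → ℝ) {u v : V}
    (p : G.Walk u v) : ℝ :=
  (p.edges.map w).sum

/-- `p` is a shortest `u`-`v` path with respect to `w`. -/
def IsShortest {V : Type*} (G : SimpleGraph V) (w : Sym2 V → ℝ) {u v : V}
    (p : G.Walk u v) : Prop :=
  p.IsPath ∧ ∀ q : G.Walk u v, q.IsPath → walkWeight w p ≤ walkWeight w q

/-- Shortest paths in `G` (w.r.t. `w`) are unique between every pair of vertices. -/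
def UniqueShortestPaths {V : Type*} (G : SimpleGraph V) (w : Sym2 V → ℝ) : Prop :=
  ∀ (u v : V) (p q : G.Walk u v), IsShortest G w p → IsShortest G w q → p = q

/-- A cycle `c` is isometric: for any two vertices on `c`, some shortest path
between them in `G` is contained in `c`. -/
def IsIsometric {V : Type*} (G : SimpleGraph V) (w : Sym2 V → ℝ) {r : V}
    (c : G.Walk r r) : Prop :=
  ∀ u v : V, u ∈ c.support → v ∈ c.support →
    ∃ p : G.Walk u v, IsShortest G w p ∧ ∀ e ∈ p.edges, e ∈ c.edges

namespace SimpleGraph.Walk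

variable {V : Type*} {G : SimpleGraph V}

theorem Nil.exists_eq_append {a x b : V} {p : G.Walk a x} (hp : p.Nil) (c : G.Walk a b) :
    ∃ t, c = p.append t := by
  cases hp
  exact ⟨c, (nil_append c).symm⟩

theorem heq_of_append_eq_append_of_length_eq {a x₁ x₂ b : V} {p₁ : G.Walk a x₁}
    {p₂ : G.Walk a x₂} {t₁ : G.Walk x₁ b} {t₂ : G.Walk x₂ b} (h : p₁.append t₁ = p₂.append t₂)
    (hl : p₁.length = p₂.length) : x₁ = x₂ ∧ p₁ ≍ p₂ := by
  induction p₁ with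
  | nil =>
    cases p₂ with
    | nil => exact ⟨rfl, .rfl⟩
    | cons => simp at hl
  | cons h₁ q₁ ih =>
    cases p₂ with
    | nil => simp at hl
    | cons h₂ q₂ =>
      simp only [cons_append, cons.injEq] at h
      obtain ⟨rfl, h⟩ := h
      obtain ⟨rfl, hq⟩ := ih (eq_of_heq h) (by simpa using hl)
      cases hq
      exact ⟨rfl, .rfl⟩

theorem IsPath.eq_of_append_eq_append {a x b : V} {p₁ p₂ : G.Walk a x} {t₁ t₂ : G.Walk x b}
    (hp : (p₁.append t₁).IsPath) (h : p₁.append t₁ = p₂.append t₂) : p₁ = p₂ := by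
  induction p₁ with
  | nil => exact (isPath_iff_nil.mp (h ▸ hp).of_append_left).eq_nil.symm
  | cons h₁ q₁ ih =>
    cases p₂ with
    | nil => exact (isPath_iff_nil.mp hp.of_append_left).eq_nil
    | cons h₂ q₂ =>
      simp only [cons_append, cons.injEq] at h
      obtain ⟨rfl, h⟩ := h
      rw [ih (by simpa using hp.of_cons) (eq_of_heq h)]

theorem IsCycle.eq_of_append_eq_append {r x : V} {p₁ p₂ : G.Walk r x} {t₁ t₂ : G.Walk x r}
    (hc : (p₁.append t₁).IsCycle) (h : p₁.append t₁ = p₂.append t₂) (hx : x ≠ r) :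
    p₁ = p₂ := by
  cases p₁ with
  | nil => exact absurd rfl hx
  | cons h₁ q₁ =>
    cases p₂ with
    | nil => exact absurd rfl hx
    | cons h₂ q₂ =>
      simp only [cons_append, cons.injEq] at h
      obtain ⟨rfl, h⟩ := h
      rw [cons_append, cons_isCycle_iff] at hc
      rw [hc.1.eq_of_append_eq_append (eq_of_heq h)]

theorem nil_or_nil_of_append_eq_append {a x₁ x₂ b : V} {p₁ : G.Walk a x₁} {p₂ : G.Walk a x₂}
    {t₁ : G.Walk x₁ b} {t₂ : G.Walk x₂ b} (h : p₁.append t₁ = p₂.append t₂)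
    (hd : p₁.edges.Disjoint p₂.edges) : p₁.Nil ∨ p₂.Nil := by
  cases p₁ with
  | nil => exact .inl .nil
  | cons h₁ q₁ =>
    cases p₂ with
    | nil => exact .inr .nil
    | cons h₂ q₂ =>
      simp only [cons_append, cons.injEq] at h
      obtain ⟨rfl, -⟩ := h
      exact (hd List.mem_cons_self List.mem_cons_self).elim

theorem IsPath.exists_eq_cons_of_mem_edges {a y b : V} {q : G.Walk a b} (hq : q.IsPath)
    (h : G.Adj a y) (he : s(a, y) ∈ q.edges) : ∃ q' : G.Walk y b, q = cons h q' := by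
  cases q with
  | nil => simp at he
  | cons h' q' =>
    rcases List.mem_cons.mp he with he | he
    · obtain rfl := Sym2.congr_right.mp he
      exact ⟨q', rfl⟩
    · exact absurd (q'.fst_mem_support_of_mem_edges he) ((cons_isPath_iff _ _).mp hq).2

theorem IsPath.exists_eq_append_of_edges_subset {a x b : V} {p : G.Walk a x} (hp : p.IsPath)
    {c : G.Walk a b} (hc : c.IsPath) (hsub : p.edges ⊆ c.edges) :
    ∃ t : G.Walk x b, c = p.append t := by
  induction p with
  | nil => exact ⟨c, (nil_append c).symm⟩
  | cons h p' ih =>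
    obtain ⟨c', rfl⟩ := hc.exists_eq_cons_of_mem_edges h (hsub List.mem_cons_self)
    have hp' := (cons_isPath_iff _ _).mp hp
    obtain ⟨t, rfl⟩ := ih hp'.1 hc.of_cons fun e he => by
      rcases List.mem_cons.mp (hsub (List.mem_cons_of_mem _ he)) with rfl | he'
      · exact absurd (p'.fst_mem_support_of_mem_edges he) hp'.2
      · exact he'
    exact ⟨t, rfl⟩

theorem IsCycle.exists_cons_eq_append_of_edges_subset {r y x : V} {h : G.Adj r y}
    {c : G.Walk y r} (hc : (cons h c).IsCycle) {p : G.Walk y x} (hp : (cons h p).IsPath)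
    (hsub : (cons h p).edges ⊆ (cons h c).edges) : ∃ t, cons h c = (cons h p).append t := by
  have hp' := (cons_isPath_iff _ _).mp hp
  obtain ⟨t, rfl⟩ := hp'.1.exists_eq_append_of_edges_subset ((cons_isCycle_iff _ _).mp hc).1
    fun e he => by
      rcases List.mem_cons.mp (hsub (List.mem_cons_of_mem _ he)) with rfl | he'
      · exact absurd (p.fst_mem_support_of_mem_edges he) hp'.2
      · exact he'
  exact ⟨t, rfl⟩

theorem IsCycle.exists_eq_append_or_reverse_eq_append {r x : V} {c : G.Walk r r}
    (hc : c.IsCycle) {p : G.Walk r x} (hp : p.IsPath) (hsub : p.edges ⊆ c.edges) :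
    (∃ t, c = p.append t) ∨ ∃ t, c.reverse = p.append t := by
  cases p with
  | nil => exact .inl ⟨c, (nil_append c).symm⟩
  | cons h p =>
    cases c with
    | nil => exact absurd hc not_isCycle_nil
    | cons h₀ c =>
      rcases List.mem_cons.mp (hsub List.mem_cons_self) with he | he
      · obtain rfl := Sym2.congr_right.mp he
        exact .inl (hc.exists_cons_eq_append_of_edges_subset hp hsub)
      · obtain ⟨q, hq⟩ := ((cons_isCycle_iff _ _).mp hc).1.reverse.exists_eq_cons_of_mem_edges h
          (by rw [edges_reverse]; exact List.mem_reverse.mpr he)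
        have hrev : (cons h₀ c).reverse = cons h (q.append (cons h₀.symm nil)) := by
          rw [reverse_cons, hq, cons_append]
        refine .inr (hrev ▸ (hrev ▸ hc.reverse).exists_cons_eq_append_of_edges_subset hp ?_)
        rw [← hrev, edges_reverse]
        exact fun e he => List.mem_reverse.mpr (hsub he)

theorem exists_eq_append_cons_reverse {a b u v : V} {c : G.Walk a b} {p : G.Walk a u}
    {q : G.Walk b v} (hp : ∃ t, c = p.append t) (hq : ∃ z, c.reverse = q.append z)
    (hl : c.length = p.length + q.length + 1) : ∃ h : G.Adj u v, c = p.append (cons h q.reverse) := by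
  obtain ⟨t, rfl⟩ := hp
  obtain ⟨z, hz⟩ := hq
  cases t with
  | nil => simp at hl; omega
  | cons h t =>
    rw [reverse_append, reverse_cons, ← append_assoc] at hz
    obtain ⟨rfl, hqt⟩ := heq_of_append_eq_append_of_length_eq hz.symm (by simp at hl ⊢; omega)
    cases hqt
    exact ⟨h, by rw [reverse_reverse]⟩

theorem exists_eq_append_cons_reverse_of_arcs {r u v : V} {c : G.Walk r r} {p : G.Walk r u}
    {q : G.Walk r v} (hpc : (∃ t, c = p.append t) ∨ ∃ t, c.reverse = p.append t)
    (hqc : (∃ t, c = q.append t) ∨ ∃ t, c.reverse = q.append t)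
    (hd : p.edges.Disjoint q.edges) (hl : c.length = p.length + q.length + 1) :
    (∃ h : G.Adj u v, c = p.append (cons h q.reverse)) ∨
      ∃ h : G.Adj v u, c = q.append (cons h p.reverse) := by
  have hl' : c.length = q.length + p.length + 1 := by omega
  rcases hpc with hpc | hpc <;> rcases hqc with hqc | hqc
  · obtain ⟨t, ht⟩ := hpc
    obtain ⟨z, hz⟩ := hqc
    rcases nil_or_nil_of_append_eq_append (ht.symm.trans hz) hd with hp | hq
    · exact .inr (exists_eq_append_cons_reverse ⟨z, hz⟩ (hp.exists_eq_append _) hl')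
    · exact .inl (exists_eq_append_cons_reverse ⟨t, ht⟩ (hq.exists_eq_append _) hl)
  · exact .inl (exists_eq_append_cons_reverse hpc hqc hl)
  · exact .inr (exists_eq_append_cons_reverse hqc hpc hl')
  · obtain ⟨t, ht⟩ := hpc
    obtain ⟨z, hz⟩ := hqc
    rcases nil_or_nil_of_append_eq_append (ht.symm.trans hz) hd with hp | hq
    · exact .inl (exists_eq_append_cons_reverse (hp.exists_eq_append _) ⟨z, hz⟩ hl)
    · exact .inr (exists_eq_append_cons_reverse (hq.exists_eq_append _) ⟨t, ht⟩ hl')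

end SimpleGraph.Walk

open SimpleGraph.Walk

section ShortestPaths

variable {V : Type*} {G : SimpleGraph V} {w : Sym2 V → ℝ}

theorem walkWeight_append {u v x : V} (p : G.Walk u v) (q : G.Walk v x) :
    walkWeight w (p.append q) = walkWeight w p + walkWeight w q := by
  simp [walkWeight, edges_append]

theorem walkWeight_bypass_le [DecidableEq V] (hw : ∀ e, 0 ≤ w e) {u v : V} (p : G.Walk u v) :
    walkWeight w p.bypass ≤ walkWeight w p :=
  (p.edges_bypass_sublist_edges.map w).sum_le_sum (by simp [hw])

theorem isShortest_nil {u : V} : IsShortest G w (nil : G.Walk u u) :=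
  ⟨.nil, fun q hq => by rw [(isPath_iff_nil.mp hq).eq_nil]⟩

theorem IsShortest.of_append_left (hw : ∀ e, 0 ≤ w e) {u v x : V} {p : G.Walk u v}
    {t : G.Walk v x} (h : IsShortest G w (p.append t)) : IsShortest G w p := by
  classical
  refine ⟨h.1.of_append_left, fun q hq => ?_⟩
  have hle := h.2 _ (q.append t).bypass_isPath
  have hby := walkWeight_bypass_le hw (q.append t)
  rw [walkWeight_append] at hle hby
  linarith

def HasShortestPrefix (G : SimpleGraph V) (w : Sym2 V → ℝ) {a b : V} (c : G.Walk a b)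
    (j : ℕ) : Prop :=
  ∃ (x : V) (p : G.Walk a x) (t : G.Walk x b),
    c = p.append t ∧ IsShortest G w p ∧ p.length = j

theorem hasShortestPrefix_zero {a b : V} (c : G.Walk a b) : HasShortestPrefix G w c 0 :=
  ⟨a, nil, c, (nil_append c).symm, isShortest_nil, rfl⟩

theorem HasShortestPrefix.le_length {a b : V} {c : G.Walk a b} {j : ℕ}
    (h : HasShortestPrefix G w c j) : j ≤ c.length := by
  obtain ⟨x, p, t, rfl, -, rfl⟩ := h
  simp

theorem HasShortestPrefix.mono (hw : ∀ e, 0 ≤ w e) {a b : V} {c : G.Walk a b} {i j : ℕ}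
    (h : HasShortestPrefix G w c j) (hij : i ≤ j) : HasShortestPrefix G w c i := by
  obtain ⟨x, p, t, rfl, hp, rfl⟩ := h
  refine ⟨_, p.take i, (p.drop i).append t, by rw [append_assoc, append_take_drop_eq], ?_,
    by simp [hij]⟩
  rw [← append_take_drop_eq p i] at hp
  exact hp.of_append_left hw

theorem exists_hasShortestPrefix_not_succ {a b : V} (c : G.Walk a b) :
    ∃ k, HasShortestPrefix G w c k ∧ ¬HasShortestPrefix G w c (k + 1) := by
  by_contra! h
  have hall (n : ℕ) : HasShortestPrefix G w c n :=
    Nat.rec (hasShortestPrefix_zero c) (fun k hk => h k hk) n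
  exact absurd (hall (c.length + 1)).le_length (by omega)

def IsBreakEdge (G : SimpleGraph V) (w : Sym2 V → ℝ) {a b : V} (c : G.Walk a b)
    (e : Sym2 V) : Prop :=
  ∃ j, HasShortestPrefix G w c j ∧ ¬HasShortestPrefix G w c (j + 1) ∧ c.edges[j]? = some e

theorem IsBreakEdge.eq (hw : ∀ e, 0 ≤ w e) {a b : V} {c : G.Walk a b} {e e' : Sym2 V}
    (he : IsBreakEdge G w c e) (he' : IsBreakEdge G w c e') : e = e' := by
  obtain ⟨i, hi, hi₁, hie⟩ := he
  obtain ⟨j, hj, hj₁, hje⟩ := he'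
  obtain rfl : i = j := le_antisymm (not_lt.mp fun hji => hj₁ (hi.mono hw hji))
    (not_lt.mp fun hij => hi₁ (hj.mono hw hij))
  exact Option.some_injective _ (hie.symm.trans hje)

theorem isBreakEdge_of_eq_append_cons_reverse (huniq : UniqueShortestPaths G w) {r u v : V}
    {c : G.Walk r r} (hc : c.IsTrail) {p : G.Walk r u} {q : G.Walk r v} {h : G.Adj u v}
    (hcpq : c = p.append (cons h q.reverse)) (hp : IsShortest G w p) (hq : IsShortest G w q) :
    IsBreakEdge G w c s(u, v) := by
  subst hcpq
  refine ⟨p.length, ⟨u, p, _, rfl, hp, rfl⟩, ?_, by simp [edges_append]⟩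
  rintro ⟨x, pp, t, hpp, hpps, hlen⟩
  have hc' : p.append (cons h q.reverse) = (p.concat h).append q.reverse := by
    rw [concat_eq_append, ← append_assoc]
    rfl
  obtain ⟨rfl, hpp'⟩ := heq_of_append_eq_append_of_length_eq (hpp.symm.trans hc') (by simp [hlen])
  cases hpp'
  -- `p.concat h` would be the shortest `r`-`v` path `q`, so `s(u, v)` would occur twice in `c`
  have hq' : q = p.concat h := huniq _ _ _ _ hq hpps
  have hnd := hc.edges_nodup
  rw [edges_append, edges_cons] at hnd
  exact (List.nodup_cons.mp hnd.of_append_right).1 (by simp [hq'])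

theorem isBreakEdge_of_cover (huniq : UniqueShortestPaths G w) {r u v : V} {c : G.Walk r r}
    (hc : c.IsCycle) {p : G.Walk r u} {q : G.Walk r v} (hp : IsShortest G w p)
    (hq : IsShortest G w q) (hperm : c.edges.Perm (s(u, v) :: (p.edges ++ q.edges))) :
    IsBreakEdge G w c s(u, v) := by
  have hnd := hperm.nodup_iff.mp hc.edges_nodup
  have hd : p.edges.Disjoint q.edges := List.disjoint_of_nodup_append (List.nodup_cons.mp hnd).2
  have hl : c.length = p.length + q.length + 1 := by
    simpa [← length_edges] using hperm.length_eq
  have harc {x : V} {s : G.Walk r x} (hs : IsShortest G w s) (hsub : s.edges ⊆ c.edges) :=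
    hc.exists_eq_append_or_reverse_eq_append hs.1 hsub
  rcases exists_eq_append_cons_reverse_of_arcs
    (harc hp fun e he => hperm.mem_iff.mpr (by simp [he]))
    (harc hq fun e he => hperm.mem_iff.mpr (by simp [he])) hd hl with ⟨h, hcpq⟩ | ⟨h, hcqp⟩
  · exact isBreakEdge_of_eq_append_cons_reverse huniq hc.isTrail hcpq hp hq
  · rw [Sym2.eq_swap]
    exact isBreakEdge_of_eq_append_cons_reverse huniq hc.isTrail hcqp hq hp

theorem SimpleGraph.Walk.IsCycle.exists_shortest_split {r : V} {c : G.Walk r r}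
    (hc : c.IsCycle) (hiso : IsIsometric G w c) :
    ∃ (u v : V) (p : G.Walk r u) (q : G.Walk r v) (h : G.Adj u v),
      c = p.append (cons h q.reverse) ∧ IsShortest G w p ∧ IsShortest G w q := by
  obtain ⟨k, ⟨u, p, t, hct, hp, rfl⟩, hk⟩ := exists_hasShortestPrefix_not_succ (w := w) c
  cases t with
  | nil =>
    rw [append_nil] at hct
    subst hct
    exact absurd (isPath_iff_nil.mp hp.1).eq_nil hc.ne_nil
  | @cons _ v _ h t =>
    refine ⟨u, v, p, t.reverse, h, by rw [reverse_reverse, hct], hp, ?_⟩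
    have hc' : c = (p.concat h).append t := by rw [hct, concat_eq_append, ← append_assoc]; rfl
    by_cases hvr : v = r
    · subst hvr
      have hcyc : ((p.concat h).append t).IsCycle := hc' ▸ hc
      have ht : t.IsPath := hcyc.isPath_of_append_right (by simp [concat_eq_append])
      rw [(isPath_iff_nil.mp ht).eq_nil]
      exact isShortest_nil
    obtain ⟨s, hs, hsc⟩ := hiso r v c.start_mem_support (by simp [hct])
    rcases hc.exists_eq_append_or_reverse_eq_append hs.1 hsc with ⟨t₂, ht₂⟩ | ⟨t₂, ht₂⟩
    · have hs' : s = p.concat h := (ht₂ ▸ hc).eq_of_append_eq_append (ht₂.symm.trans hc') hvr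
      exact absurd ⟨v, s, t₂, ht₂, hs, by simp [hs']⟩ hk
    · have hrev : c.reverse = t.reverse.append (cons h.symm p.reverse) := by
        rw [hct, reverse_append, reverse_cons, ← append_assoc]
        rfl
      have hcr : (s.append t₂).IsCycle := ht₂ ▸ hc.reverse
      rwa [hcr.eq_of_append_eq_append (ht₂.symm.trans hrev) hvr] at hs

end ShortestPaths

theorem isometric_cycle_shortest_path_cover_general
    {V : Type*} (G : SimpleGraph V) (w : Sym2 V → ℝ)
    (hw : ∀ e, 0 < w e)
    (huniq : UniqueShortestPaths G w)
    {r : V} (c : G.Walk r r) (hc : c.IsCycle) (hiso : IsIsometric G w c) :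
    ∃! e : Sym2 V, e ∈ c.edges ∧
      ∃ (u v : V) (p : G.Walk r u) (q : G.Walk r v),
        e = s(u, v) ∧ u ∈ c.support ∧ v ∈ c.support ∧
        IsShortest G w p ∧ IsShortest G w q ∧
        c.edges.Perm (e :: (p.edges ++ q.edges)) := by
  have hw' : ∀ e, 0 ≤ w e := fun e => (hw e).le
  obtain ⟨u, v, p, q, h, hcpq, hp, hq⟩ := hc.exists_shortest_split hiso
  refine ⟨s(u, v), ⟨by simp [hcpq], u, v, p, q, rfl, by simp [hcpq], by simp [hcpq], hp, hq, ?_⟩,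
    ?_⟩
  · rw [hcpq, edges_append, edges_cons, edges_reverse]
    exact List.perm_middle.trans ((q.edges.reverse_perm.append_left _).cons _)
  · rintro e ⟨-, u', v', p', q', rfl, -, -, hp', hq', hperm⟩
    exact (isBreakEdge_of_cover huniq hc hp' hq' hperm).eq hw'
      (isBreakEdge_of_eq_append_cons_reverse huniq hc.isTrail hcpq hp hq)

/-- Let `C` be an isometric cycle in a graph with positive edge weights and unique
shortest paths, and let `r` be a vertex on `C`.  Then there is a unique edge
`e = (u,v)` on `C` such that `C` is the disjoint union of `e`, the shortest `r`-to-`u`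
path, and the shortest `r`-to-`v` path (as a multiset of edges, `C` consists exactly
of `e` together with the edges of the two shortest paths). -/
theorem isometric_cycle_shortest_path_cover
    {V : Type*} (G : SimpleGraph V) (w : Sym2 V → ℝ)
    (hw : ∀ e, 0 < w e)
    (huniq : UniqueShortestPaths G w)
    {r : V} (c : G.Walk r r) (hc : c.IsCycle) (hiso : IsIsometric G w c)
    (hr : r ∈ c.support) :
    ∃! e : Sym2 V, e ∈ c.edges ∧
      ∃ (u v : V) (p : G.Walk r u) (q : G.Walk r v),
        e = s(u, v) ∧ u ∈ c.support ∧ v ∈ c.support ∧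
        IsShortest G w p ∧ IsShortest G w q ∧
        c.edges.Perm (e :: (p.edges ++ q.edges)) :=
  isometric_cycle_shortest_path_cover_general G w hw huniq c hc hiso
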